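/- arXiv:2510.24850 — 2 statements merged into one kernel-verified Lean document; each statement's English description precedes it below -/
import Mathlib

section
/- Let k_M be vector fields on a manifold satisfying [k_M, k_N] = −X_{MN}^P k_P for constants X, and let A^M be 1-forms on another factor (external forms, so that contractions ι_{k_M} A^N = 0). Define the operator O = −A^M ∧ ι_{k_M} acting on differential forms on the product. Then the twisted differential e^{−O} ∘ d ∘ e^{O} equals d + dA^M ∧ ι_{k_M} − A^M ∧ 𝓛_{k_M} + (1/2) A^M ∧ A^N X_{MN}^P ι_{k_P}, i.e. the Baker–Campbell–Hausdorff series [O, d]_n terminates: [O,d] = dA^M ι_{k_M} − A^M 𝓛_{k_M}, [O,[O,d]] = A^M A^N X_{MN}^P ι_{k_P}, and all higher nested commutators vanish. -/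
/-- The Baker–Campbell–Hausdorff series for the twisted differential
`e^{−O} d e^{O}`, with `O = −A^M ∧ ι_{k_M}`, terminates:
`[O,d] = dA^M ∧ ι_{k_M} − A^M ∧ 𝓛_{k_M}`,
`[O,[O,d]] = A^M ∧ A^N X_{MN}^P ι_{k_P}`, and all higher nested commutators vanish,
so that `e^{−O} d e^{O} = d + dA^M ι_{k_M} − A^M 𝓛_{k_M} + ½ A^M A^N X_{MN}^P ι_{k_P}`.

We model operators on the exterior algebra of the product manifold abstractly as
endomorphisms of a module `Ω`: `a M` is wedging with the external one-form `A^M`,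
`b M` is wedging with `dA^M`, `i M` is the interior product `ι_{k_M}`, `L M` is the
Lie derivative `𝓛_{k_M}`, and `d` the exterior derivative; the hypotheses encode
`ι_{k_M} A^N = 0`, `𝓛_{k_M} A^N = 0`, Cartan's formula, and
`[k_M, k_N] = −X_{MN}^P k_P`. -/
theorem twisted_differential_bch_terminates
    {ι Ω : Type*} [Fintype ι] [AddCommGroup Ω] [Module ℝ Ω]
    (d : Module.End ℝ Ω) (a b i L : ι → Module.End ℝ Ω) (X : ι → ι → ι → ℝ)
    (h_aa : ∀ M N, a M * a N = -(a N * a M))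
    (h_ia : ∀ M N, i M * a N = -(a N * i M))
    (h_ii : ∀ M N, i M * i N = -(i N * i M))
    (h_da : ∀ M, d * a M + a M * d = b M)
    (h_ib : ∀ M N, i M * b N = b N * i M)
    (h_ab : ∀ M N, a M * b N = b N * a M)
    (h_cartan : ∀ M, L M = d * i M + i M * d)
    (h_Li : ∀ M N, L M * i N - i N * L M = -∑ P, X M N P • i P)
    (h_La : ∀ M N, L M * a N = a N * L M) :
    (⁅-∑ M, a M * i M, d⁆ = ∑ M, (b M * i M - a M * L M)) ∧
    (⁅-∑ M, a M * i M, ⁅-∑ M, a M * i M, d⁆⁆ =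
      ∑ M, ∑ N, ∑ P, X M N P • (a M * a N * i P)) ∧
    (⁅-∑ M, a M * i M, ⁅-∑ M, a M * i M, ⁅-∑ M, a M * i M, d⁆⁆⁆ = 0) := by
  have hia' : ∀ M N (x : Module.End ℝ Ω), i M * (a N * x) = -(a N * (i M * x)) := by
    intro M N x; rw [← mul_assoc, h_ia, neg_mul, mul_assoc]
  have haa' : ∀ M N (x : Module.End ℝ Ω), a M * (a N * x) = -(a N * (a M * x)) := by
    intro M N x; rw [← mul_assoc, h_aa, neg_mul, mul_assoc]
  have hib' : ∀ M N (x : Module.End ℝ Ω), i M * (b N * x) = b N * (i M * x) := by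
    intro M N x; rw [← mul_assoc, h_ib, mul_assoc]
  have hab' : ∀ M N (x : Module.End ℝ Ω), a M * (b N * x) = b N * (a M * x) := by
    intro M N x; rw [← mul_assoc, h_ab, mul_assoc]
  have hLa' : ∀ M N (x : Module.End ℝ Ω), L M * (a N * x) = a N * (L M * x) := by
    intro M N x; rw [← mul_assoc, h_La, mul_assoc]
  have hLi' : ∀ M N, i N * L M = L M * i N + ∑ P, X M N P • i P := by
    intro M N
    have h := h_Li M N
    linear_combination (norm := abel) -h
  have sum_lie' : ∀ (f : ι → Module.End ℝ Ω) (y : Module.End ℝ Ω),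
      ⁅∑ M, f M, y⁆ = ∑ M, ⁅f M, y⁆ := by
    intro f y
    simp only [Ring.lie_def, Finset.sum_mul, Finset.mul_sum, Finset.sum_sub_distrib]
  have lie_sum' : ∀ (x : Module.End ℝ Ω) (f : ι → Module.End ℝ Ω),
      ⁅x, ∑ M, f M⁆ = ∑ M, ⁅x, f M⁆ := by
    intro x f
    simp only [Ring.lie_def, Finset.sum_mul, Finset.mul_sum, Finset.sum_sub_distrib]
  have key1 : ∀ M, ⁅a M * i M, d⁆ = a M * L M - b M * i M := by
    intro M
    have hda : d * a M = b M - a M * d := eq_sub_of_add_eq (h_da M)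
    rw [Ring.lie_def, h_cartan M,
      show d * (a M * i M) = d * a M * i M from (mul_assoc _ _ _).symm, hda]
    noncomm_ring
  have key2 : ∀ M N, ⁅a M * i M, b N * i N⁆ = 0 := by
    intro M N
    rw [Ring.lie_def]
    simp only [mul_assoc]
    rw [hib' M N, hab' M N, hia' N M, h_ii N M]
    noncomm_ring
  have key3 : ∀ M N, ⁅a M * i M, a N * L N⁆ = -(a M * (a N * ∑ P, X N M P • i P)) := by
    intro M N
    rw [Ring.lie_def]
    simp only [mul_assoc]
    rw [hia' M N, hLa' N M, hLi' N M, haa' N M]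
    noncomm_ring
  have key4 : ∀ Q M N P, ⁅a Q * i Q, a M * a N * i P⁆ = 0 := by
    intro Q M N P
    rw [Ring.lie_def]
    simp only [mul_assoc]
    rw [hia' Q M, hia' Q N, hia' P Q, h_ii P Q]
    simp only [mul_neg, neg_neg]
    rw [haa' N Q]
    simp only [mul_neg]
    rw [haa' M Q]
    noncomm_ring
  have neg_lie' : ∀ x y : Module.End ℝ Ω, ⁅-x, y⁆ = -⁅x, y⁆ := by
    intro x y
    simp only [Ring.lie_def]
    noncomm_ring
  have lie_sub' : ∀ x y z : Module.End ℝ Ω, ⁅x, y - z⁆ = ⁅x, y⁆ - ⁅x, z⁆ := by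
    intro x y z
    simp only [Ring.lie_def]
    noncomm_ring
  have lie_smul' : ∀ (t : ℝ) (x y : Module.End ℝ Ω), ⁅x, t • y⁆ = t • ⁅x, y⁆ := by
    intro t x y
    simp only [Ring.lie_def, mul_smul_comm, smul_mul_assoc, smul_sub]
  have g1 : ⁅-∑ M, a M * i M, d⁆ = ∑ M, (b M * i M - a M * L M) := by
    rw [neg_lie', sum_lie', ← Finset.sum_neg_distrib]
    exact Finset.sum_congr rfl fun M _ => by rw [key1 M, neg_sub]
  have g2 : ⁅-∑ M, a M * i M, ⁅-∑ M, a M * i M, d⁆⁆ =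
      ∑ M, ∑ N, ∑ P, X M N P • (a M * a N * i P) := by
    rw [g1, neg_lie', sum_lie']
    have expand : ∀ M, ⁅a M * i M, ∑ N, (b N * i N - a N * L N)⁆ =
        ∑ N, (a M * (a N * ∑ P, X N M P • i P)) := by
      intro M
      rw [lie_sum']
      refine Finset.sum_congr rfl fun N _ => ?_
      rw [lie_sub', key2, key3]
      abel
    calc -∑ M, ⁅a M * i M, ∑ N, (b N * i N - a N * L N)⁆
        = ∑ M, ∑ N, -(a M * (a N * ∑ P, X N M P • i P)) := by
          rw [← Finset.sum_neg_distrib]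
          refine Finset.sum_congr rfl fun M _ => ?_
          rw [expand M, ← Finset.sum_neg_distrib]
      _ = ∑ M, ∑ N, ∑ P, X N M P • (a N * a M * i P) := by
          refine Finset.sum_congr rfl fun M _ => Finset.sum_congr rfl fun N _ => ?_
          rw [Finset.mul_sum, Finset.mul_sum, ← Finset.sum_neg_distrib]
          refine Finset.sum_congr rfl fun P _ => ?_
          rw [mul_smul_comm, mul_smul_comm, ← mul_assoc, h_aa M N]
          simp [smul_neg, neg_mul]
      _ = ∑ M, ∑ N, ∑ P, X M N P • (a M * a N * i P) := Finset.sum_comm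
  refine ⟨g1, g2, ?_⟩
  rw [g2, neg_lie', sum_lie']
  simp only [lie_sum', lie_smul', key4, smul_zero, Finset.sum_const_zero, neg_zero]
end

section
/- With the setup of the twisted differential, the operator 𝒟 = d + F^M ∧ ι_{k_M} − A^M ∧ 𝓛_{k_M}, where F^M = dA^M + (1/2) X_{NP}^M A^N ∧ A^P, satisfies 𝒟² = 0 on differential forms, provided the vector fields satisfy [k_M, k_N] = −X_{MN}^P k_P, the forms A^M are closed under ι_{k_M} and 𝓛_{k_M}, and X satisfies the quadratic constraint X_{MN}^R X_{RP}^Q antisymmetrized appropriately (i.e. the X_M close as a Lie algebra representation). -/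
section Helpers

variable {ι : Type*} [Fintype ι]

private lemma sum_antisym {M : Type*} [AddCommGroup M] [Module ℝ M]
    (f : ι → ι → M) (h : ∀ x y, f x y = - f y x) : (∑ x, ∑ y, f x y) = 0 := by
  have h1 : (∑ x, ∑ y, f x y) = - ∑ x, ∑ y, f x y := by
    calc (∑ x, ∑ y, f x y) = ∑ x, ∑ y, - f y x :=
          Finset.sum_congr rfl fun x _ => Finset.sum_congr rfl fun y _ => h x y
      _ = - ∑ x, ∑ y, f y x := by simp
      _ = - ∑ x, ∑ y, f x y := by rw [Finset.sum_comm]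
  have h2 : (∑ x, ∑ y, f x y) + (∑ x, ∑ y, f x y) = 0 := by
    nth_rewrite 1 [h1]; simp
  calc (∑ x, ∑ y, f x y) = (1/2 : ℝ) • ((∑ x, ∑ y, f x y) + (∑ x, ∑ y, f x y)) := by
        rw [← two_smul ℝ, smul_smul]; norm_num
    _ = 0 := by rw [h2, smul_zero]

private lemma sum_rot3 {M : Type*} [AddCommMonoid M] (f : ι → ι → ι → M) :
    ∑ x, ∑ y, ∑ z, f x y z = ∑ z, ∑ x, ∑ y, f x y z := by
  calc ∑ x, ∑ y, ∑ z, f x y z = ∑ x, ∑ z, ∑ y, f x y z :=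
        Finset.sum_congr rfl fun x _ => Finset.sum_comm
    _ = ∑ z, ∑ x, ∑ y, f x y z := Finset.sum_comm

private lemma sum_rot3' {M : Type*} [AddCommMonoid M] (f : ι → ι → ι → M) :
    ∑ x, ∑ y, ∑ z, f x y z = ∑ y, ∑ z, ∑ x, f x y z := by
  calc ∑ x, ∑ y, ∑ z, f x y z = ∑ y, ∑ x, ∑ z, f x y z := Finset.sum_comm
    _ = ∑ y, ∑ z, ∑ x, f x y z := Finset.sum_congr rfl fun y _ => Finset.sum_comm

private lemma sum_swap13 {M : Type*} [AddCommMonoid M] (f : ι → ι → ι → M) :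
    ∑ x, ∑ y, ∑ z, f x y z = ∑ z, ∑ y, ∑ x, f x y z := by
  calc ∑ x, ∑ y, ∑ z, f x y z = ∑ y, ∑ x, ∑ z, f x y z := Finset.sum_comm
    _ = ∑ y, ∑ z, ∑ x, f x y z := Finset.sum_congr rfl fun y _ => Finset.sum_comm
    _ = ∑ z, ∑ y, ∑ x, f x y z := Finset.sum_comm

private lemma sum_rot4 {M : Type*} [AddCommMonoid M] (f : ι → ι → ι → ι → M) :
    ∑ x, ∑ y, ∑ z, ∑ w, f x y z w = ∑ w, ∑ x, ∑ y, ∑ z, f x y z w := by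
  calc ∑ x, ∑ y, ∑ z, ∑ w, f x y z w = ∑ x, ∑ y, ∑ w, ∑ z, f x y z w :=
        Finset.sum_congr rfl fun x _ => Finset.sum_congr rfl fun y _ => Finset.sum_comm
    _ = ∑ x, ∑ w, ∑ y, ∑ z, f x y z w := Finset.sum_congr rfl fun x _ => Finset.sum_comm
    _ = ∑ w, ∑ x, ∑ y, ∑ z, f x y z w := Finset.sum_comm

private lemma sum_rot5 {M : Type*} [AddCommMonoid M] (f : ι → ι → ι → ι → ι → M) :
    ∑ x, ∑ y, ∑ z, ∑ w, ∑ v, f x y z w v = ∑ v, ∑ x, ∑ y, ∑ z, ∑ w, f x y z w v := by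
  calc ∑ x, ∑ y, ∑ z, ∑ w, ∑ v, f x y z w v
      = ∑ x, ∑ y, ∑ z, ∑ v, ∑ w, f x y z w v :=
        Finset.sum_congr rfl fun x _ => Finset.sum_congr rfl fun y _ =>
          Finset.sum_congr rfl fun z _ => Finset.sum_comm
    _ = ∑ x, ∑ y, ∑ v, ∑ z, ∑ w, f x y z w v :=
        Finset.sum_congr rfl fun x _ => Finset.sum_congr rfl fun y _ => Finset.sum_comm
    _ = ∑ x, ∑ v, ∑ y, ∑ z, ∑ w, f x y z w v :=
        Finset.sum_congr rfl fun x _ => Finset.sum_comm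
    _ = ∑ v, ∑ x, ∑ y, ∑ z, ∑ w, f x y z w v := Finset.sum_comm

private lemma sum_prod3 {M : Type*} [AddCommMonoid M] (f : ι → ι → ι → M) :
    ∑ x, ∑ y, ∑ z, f x y z = ∑ t : ι × ι × ι, f t.1 t.2.1 t.2.2 := by
  rw [Fintype.sum_prod_type]
  exact Finset.sum_congr rfl fun x _ => (Fintype.sum_prod_type (fun p : ι × ι => f x p.1 p.2)).symm

end Helpers

/-- The twisted differential
`𝒟 = d + F^M ∧ ι_{k_M} − A^M ∧ 𝓛_{k_M}` with
`F^M = dA^M + ½ X_{NP}^M A^N ∧ A^P` satisfies `𝒟² = 0`, provided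
`[k_M, k_N] = −X_{MN}^P k_P`, the forms `A^M` are external
(`ι_{k_M} A^N = 0`, `𝓛_{k_M} A^N = 0`) and `X` satisfies the quadratic constraint
(the `X_M` close as a Lie algebra representation).

Operators on forms are modelled as endomorphisms of a module `Ω`, as in the twisted
differential setup: `a M` is wedging with `A^M`, `b M` wedging with `dA^M`, `i M`
the interior product `ι_{k_M}`, `L M` the Lie derivative `𝓛_{k_M}`. -/
theorem twisted_differential_squares_to_zero
    {ι Ω : Type*} [Fintype ι] [AddCommGroup Ω] [Module ℝ Ω]
    (d : Module.End ℝ Ω) (a b i L : ι → Module.End ℝ Ω) (X : ι → ι → ι → ℝ)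
    (h_dd : d * d = 0)
    (h_aa : ∀ M N, a M * a N = -(a N * a M))
    (h_ia : ∀ M N, i M * a N = -(a N * i M))
    (h_ii : ∀ M N, i M * i N = -(i N * i M))
    (h_da : ∀ M, d * a M + a M * d = b M)
    (h_db : ∀ M, d * b M = b M * d)
    (h_ib : ∀ M N, i M * b N = b N * i M)
    (h_ab : ∀ M N, a M * b N = b N * a M)
    (h_cartan : ∀ M, L M = d * i M + i M * d)
    (h_Li : ∀ M N, L M * i N - i N * L M = -∑ P, X M N P • i P)
    (h_La : ∀ M N, L M * a N = a N * L M)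
    (hX_asym : ∀ M N P, X M N P = -X N M P)
    (h_quad : ∀ M N P Q,
      ∑ R, (X M R Q * X N P R - X N R Q * X M P R) = -∑ R, X M N R * X R P Q) :
    (d + ∑ M, (b M + (1/2 : ℝ) • ∑ N, ∑ P, X N P M • (a N * a P)) * i M
        - ∑ M, a M * L M) *
    (d + ∑ M, (b M + (1/2 : ℝ) • ∑ N, ∑ P, X N P M • (a N * a P)) * i M
        - ∑ M, a M * L M) = 0 := by
  -- extended (right-assoc) commutation helpers
  have iaX : ∀ M N (x : Module.End ℝ Ω), i M * (a N * x) = -(a N * (i M * x)) := by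
    intro M N x; rw [← mul_assoc, h_ia M N, neg_mul, mul_assoc]
  have aaX : ∀ M N (x : Module.End ℝ Ω), a M * (a N * x) = -(a N * (a M * x)) := by
    intro M N x; rw [← mul_assoc, h_aa M N, neg_mul, mul_assoc]
  have ibX : ∀ M N (x : Module.End ℝ Ω), i M * (b N * x) = b N * (i M * x) := by
    intro M N x; rw [← mul_assoc, h_ib M N, mul_assoc]
  have baX : ∀ M N (x : Module.End ℝ Ω), b M * (a N * x) = a N * (b M * x) := by
    intro M N x; rw [← mul_assoc, ← h_ab N M, mul_assoc]
  have LaX : ∀ M N (x : Module.End ℝ Ω), L M * (a N * x) = a N * (L M * x) := by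
    intro M N x; rw [← mul_assoc, h_La M N, mul_assoc]
  have hLd : ∀ M, L M * d = d * L M := by
    intro M
    rw [h_cartan M, add_mul, mul_add, mul_assoc (i M) d d, h_dd, mul_zero, add_zero,
      ← mul_assoc d d (i M), h_dd, zero_mul, zero_add, mul_assoc]
  have hLb : ∀ M N, L M * b N = b N * L M := by
    intro M N
    calc L M * b N = d * (i M * b N) + i M * (d * b N) := by
          rw [h_cartan M, add_mul, mul_assoc, mul_assoc]
      _ = d * (b N * i M) + i M * (b N * d) := by rw [h_ib, h_db]
      _ = b N * (d * i M) + b N * (i M * d) := by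
          rw [show d * (b N * i M) = (d * b N) * i M from (mul_assoc _ _ _).symm, h_db,
            mul_assoc, show i M * (b N * d) = (i M * b N) * d from (mul_assoc _ _ _).symm,
            h_ib, mul_assoc]
      _ = b N * L M := by rw [← mul_add, ← h_cartan]
  have LbX : ∀ M N (x : Module.End ℝ Ω), L M * (b N * x) = b N * (L M * x) := by
    intro M N x; rw [← mul_assoc, hLb M N, mul_assoc]
  have hbb : ∀ M N, b M * b N = b N * b M := by
    intro M N
    calc b M * b N = (d * a M + a M * d) * b N := by rw [h_da]
      _ = d * (a M * b N) + a M * (d * b N) := by rw [add_mul, mul_assoc, mul_assoc]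
      _ = d * (b N * a M) + a M * (b N * d) := by rw [h_ab, h_db]
      _ = b N * (d * a M) + b N * (a M * d) := by
          rw [show d * (b N * a M) = (d * b N) * a M from (mul_assoc _ _ _).symm, h_db,
            mul_assoc, show a M * (b N * d) = (a M * b N) * d from (mul_assoc _ _ _).symm,
            h_ab, mul_assoc]
      _ = b N * b M := by rw [← mul_add, h_da]
  have bbX : ∀ M N (x : Module.End ℝ Ω), b M * (b N * x) = b N * (b M * x) := by
    intro M N x; rw [← mul_assoc, hbb M N, mul_assoc]
  have daX : ∀ M (x : Module.End ℝ Ω), d * (a M * x) = b M * x - a M * (d * x) := by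
    intro M x
    rw [← mul_assoc, show d * a M = b M - a M * d from by rw [← h_da M]; abel, sub_mul,
      mul_assoc]
  have hLi' : ∀ M N, L M * i N = i N * L M - ∑ P, X M N P • i P := by
    intro M N
    have h := h_Li M N
    rw [sub_eq_iff_eq_add] at h
    rw [h]; abel
  have hLL : ∀ M N, L M * L N = L N * L M - ∑ P, X M N P • L P := by
    intro M N
    calc L M * L N = L M * (d * i N) + L M * (i N * d) := by rw [h_cartan N, mul_add]
      _ = d * (L M * i N) + (L M * i N) * d := by
          rw [show L M * (d * i N) = d * (L M * i N) from by
                rw [← mul_assoc, hLd M, mul_assoc],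
              show L M * (i N * d) = (L M * i N) * d from (mul_assoc _ _ _).symm]
      _ = (d * (i N * L M) + (i N * L M) * d)
          - (d * (∑ P, X M N P • i P) + (∑ P, X M N P • i P) * d) := by
          rw [hLi' M N, mul_sub, sub_mul]; abel
      _ = L N * L M - ∑ P, X M N P • L P := by
          congr 1
          · rw [show d * (i N * L M) = (d * i N) * L M from (mul_assoc _ _ _).symm,
              show (i N * L M) * d = i N * (L M * d) from mul_assoc _ _ _, hLd M,
              ← mul_assoc, ← add_mul, ← h_cartan N]
          · rw [Finset.mul_sum, Finset.sum_mul, ← Finset.sum_add_distrib]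
            refine Finset.sum_congr rfl fun P _ => ?_
            rw [mul_smul_comm, smul_mul_assoc, ← smul_add, ← h_cartan P]
  -- basic operators
  set B : Module.End ℝ Ω := ∑ M, b M * i M with hB
  set G0 : Module.End ℝ Ω := ∑ M, ∑ N, ∑ P, X N P M • (a N * (a P * i M)) with hG0
  set E : Module.End ℝ Ω := ∑ M, a M * L M with hE
  set G : Module.End ℝ Ω := (1/2 : ℝ) • G0 with hG
  set T1 : Module.End ℝ Ω := ∑ M, b M * L M with hT1
  set T2 : Module.End ℝ Ω := ∑ M, ∑ N, ∑ P, X N P M • (a N * (b P * i M)) with hT2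
  set T3 : Module.End ℝ Ω := ∑ M, ∑ N, ∑ P, X N P M • (a N * (a P * L M)) with hT3
  -- split the curvature sum
  have hsplit : (∑ M, (b M + (1/2 : ℝ) • ∑ N, ∑ P, X N P M • (a N * a P)) * i M) = B + G := by
    rw [hG, hB, hG0]
    have e1 : ∀ M, (b M + (1/2 : ℝ) • ∑ N, ∑ P, X N P M • (a N * a P)) * i M
        = b M * i M + (1/2 : ℝ) • ∑ N, ∑ P, X N P M • (a N * (a P * i M)) := by
      intro M
      rw [add_mul, smul_mul_assoc]
      congr 2
      simp only [Finset.sum_mul, smul_mul_assoc, mul_assoc]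
    rw [Finset.sum_congr rfl fun M _ => e1 M, Finset.sum_add_distrib, ← Finset.smul_sum]
  -- c1
  have c1 : d * B + B * d = T1 := by
    rw [hB, hT1, Finset.mul_sum, Finset.sum_mul, ← Finset.sum_add_distrib]
    refine Finset.sum_congr rfl fun M _ => ?_
    calc d * (b M * i M) + b M * i M * d
        = b M * (d * i M) + b M * (i M * d) := by
          rw [show d * (b M * i M) = (d * b M) * i M from (mul_assoc _ _ _).symm, h_db M,
            mul_assoc, mul_assoc]
      _ = b M * L M := by rw [← mul_add, ← h_cartan M]
  -- c2
  have c2 : d * E + E * d = T1 := by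
    rw [hE, hT1, Finset.mul_sum, Finset.sum_mul, ← Finset.sum_add_distrib]
    refine Finset.sum_congr rfl fun M _ => ?_
    calc d * (a M * L M) + a M * L M * d
        = (d * a M) * L M + (a M * d) * L M := by
          rw [show d * (a M * L M) = (d * a M) * L M from (mul_assoc _ _ _).symm,
            show a M * L M * d = (a M * d) * L M from by
              rw [mul_assoc, hLd M, ← mul_assoc]]
      _ = b M * L M := by rw [← add_mul, h_da M]
  -- c3
  have c3a : d * G0 + G0 * d =
      (∑ M, ∑ N, ∑ P, X N P M • (b N * (a P * i M)))
      - (∑ M, ∑ N, ∑ P, X N P M • (a N * (b P * i M)))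
      + (∑ M, ∑ N, ∑ P, X N P M • (a N * (a P * L M))) := by
    rw [hG0]
    simp only [Finset.mul_sum, Finset.sum_mul]
    simp only [← Finset.sum_add_distrib]
    have per : ∀ M N P,
        d * (X N P M • (a N * (a P * i M))) + (X N P M • (a N * (a P * i M))) * d
        = X N P M • (b N * (a P * i M)) - X N P M • (a N * (b P * i M))
          + X N P M • (a N * (a P * L M)) := by
      intro M N P
      rw [mul_smul_comm, smul_mul_assoc, ← smul_add, ← smul_sub, ← smul_add]
      congr 1
      rw [daX N (a P * i M), daX P (i M),
        show (a N * (a P * i M)) * d = a N * (a P * (i M * d)) from by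
          rw [mul_assoc, mul_assoc], h_cartan M]
      simp only [mul_sub, mul_add]
      abel
    rw [Finset.sum_congr rfl fun M _ => Finset.sum_congr rfl fun N _ =>
      Finset.sum_congr rfl fun P _ => per M N P]
    simp only [Finset.sum_add_distrib, Finset.sum_sub_distrib]
  have c3b : (∑ M, ∑ N, ∑ P, X N P M • (b N * (a P * i M))) = -T2 := by
    rw [hT2]
    calc ∑ M, ∑ N, ∑ P, X N P M • (b N * (a P * i M))
        = ∑ M, ∑ N, ∑ P, X N P M • (a P * (b N * i M)) := by
          refine Finset.sum_congr rfl fun M _ => Finset.sum_congr rfl fun N _ =>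
            Finset.sum_congr rfl fun P _ => ?_
          rw [baX]
      _ = ∑ M, ∑ N, ∑ P, X P N M • (a N * (b P * i M)) :=
          Finset.sum_congr rfl fun M _ => Finset.sum_comm
      _ = -∑ M, ∑ N, ∑ P, X N P M • (a N * (b P * i M)) := by
          simp only [← Finset.sum_neg_distrib]
          refine Finset.sum_congr rfl fun M _ => Finset.sum_congr rfl fun N _ =>
            Finset.sum_congr rfl fun P _ => ?_
          rw [hX_asym P N M, neg_smul]
  -- c4 : B * B = 0
  have c4 : B * B = 0 := by
    rw [hB, show (∑ M, b M * i M) * (∑ N, b N * i N)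
        = ∑ M, ∑ N, (b M * i M) * (b N * i N) from by
          rw [Finset.sum_mul]
          exact Finset.sum_congr rfl fun M _ => Finset.mul_sum _ _ _]
    refine sum_antisym _ fun M N => ?_
    calc (b M * i M) * (b N * i N) = b M * (b N * (i M * i N)) := by
          rw [mul_assoc, ibX M N]
      _ = -((b N * i N) * (b M * i M)) := by
          rw [h_ii M N, show (b N * i N) * (b M * i M) = b N * (b M * (i N * i M)) from by
            rw [mul_assoc, ibX N M]]
          simp only [mul_neg]
          rw [bbX M N]
  -- c5 : B * G0 + G0 * B = 0
  have c5 : B * G0 + G0 * B = 0 := by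
    rw [hB, hG0]
    have e1 : (∑ M, b M * i M) * (∑ Q, ∑ N, ∑ P, X N P Q • (a N * (a P * i Q)))
        = ∑ M, ∑ Q, ∑ N, ∑ P, X N P Q • ((b M * i M) * (a N * (a P * i Q))) := by
      rw [Finset.sum_mul]
      refine Finset.sum_congr rfl fun M _ => ?_
      simp only [Finset.mul_sum, mul_smul_comm]
    have e2 : (∑ Q, ∑ N, ∑ P, X N P Q • (a N * (a P * i Q))) * (∑ M, b M * i M)
        = ∑ M, ∑ Q, ∑ N, ∑ P, X N P Q • ((a N * (a P * i Q)) * (b M * i M)) := by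
      rw [Finset.mul_sum]
      refine Finset.sum_congr rfl fun M _ => ?_
      simp only [Finset.sum_mul, smul_mul_assoc]
    rw [e1, e2]
    simp only [← Finset.sum_add_distrib]
    refine Finset.sum_eq_zero fun M _ => Finset.sum_eq_zero fun Q _ =>
      Finset.sum_eq_zero fun N _ => Finset.sum_eq_zero fun P _ => ?_
    have hu : (b M * i M) * (a N * (a P * i Q)) = a N * (a P * (b M * (i M * i Q))) := by
      rw [mul_assoc, iaX M N, mul_neg, iaX M P]
      simp only [mul_neg, neg_neg]
      rw [baX M N, baX M P]
    have hv : (a N * (a P * i Q)) * (b M * i M) = a N * (a P * (b M * (i Q * i M))) := by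
      rw [mul_assoc, mul_assoc, ibX Q M]
    rw [hu, hv, h_ii Q M]
    simp only [mul_neg, smul_neg]
    exact add_neg_cancel _
  -- c6 : G0 * G0 = 0
  have a4 : ∀ N P Q R (x : Module.End ℝ Ω),
      a N * (a P * (a Q * (a R * x))) = a Q * (a R * (a N * (a P * x))) := by
    intro N P Q R x
    rw [aaX P Q]
    simp only [mul_neg]
    rw [aaX N Q]
    simp only [neg_neg]
    rw [aaX P R]
    simp only [mul_neg]
    rw [aaX N R]
    simp only [mul_neg, neg_neg]
  have c6 : G0 * G0 = 0 := by
    rw [hG0, sum_prod3 (fun M N P => X N P M • (a N * (a P * i M)))]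
    rw [show (∑ t : ι × ι × ι, X t.2.1 t.2.2 t.1 • (a t.2.1 * (a t.2.2 * i t.1)))
          * (∑ t : ι × ι × ι, X t.2.1 t.2.2 t.1 • (a t.2.1 * (a t.2.2 * i t.1)))
        = ∑ t : ι × ι × ι, ∑ s : ι × ι × ι,
            (X t.2.1 t.2.2 t.1 • (a t.2.1 * (a t.2.2 * i t.1)))
            * (X s.2.1 s.2.2 s.1 • (a s.2.1 * (a s.2.2 * i s.1))) from by
          rw [Finset.sum_mul]
          exact Finset.sum_congr rfl fun t _ => Finset.mul_sum _ _ _]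
    refine sum_antisym _ fun t s => ?_
    obtain ⟨M, N, P⟩ := t; obtain ⟨Q, R, S⟩ := s
    dsimp only
    simp only [smul_mul_assoc, mul_smul_comm, smul_smul]
    rw [mul_comm (X R S Q) (X N P M), ← smul_neg]
    congr 1
    have h1 : (a N * (a P * i M)) * (a R * (a S * i Q))
        = a N * (a P * (a R * (a S * (i M * i Q)))) := by
      rw [mul_assoc, mul_assoc, iaX M R]
      simp only [mul_neg]
      rw [iaX M S]
      simp only [mul_neg, neg_neg]
    have h2 : (a R * (a S * i Q)) * (a N * (a P * i M))
        = a R * (a S * (a N * (a P * (i Q * i M)))) := by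
      rw [mul_assoc, mul_assoc, iaX Q N]
      simp only [mul_neg]
      rw [iaX Q P]
      simp only [mul_neg, neg_neg]
    rw [h1, h2, h_ii Q M]
    simp only [mul_neg, neg_neg]
    exact a4 N P R S (i M * i Q)
  -- c7 : B * E + E * B = -T2
  have c7 : B * E + E * B = -T2 := by
    rw [hB, hE, hT2]
    have e1 : (∑ M, b M * i M) * (∑ Q, a Q * L Q)
        = ∑ M, ∑ Q, (b M * i M) * (a Q * L Q) := by
      rw [Finset.sum_mul]
      exact Finset.sum_congr rfl fun M _ => Finset.mul_sum _ _ _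
    have e2 : (∑ Q, a Q * L Q) * (∑ M, b M * i M)
        = ∑ M, ∑ Q, (a Q * L Q) * (b M * i M) := by
      rw [Finset.mul_sum]
      exact Finset.sum_congr rfl fun M _ => Finset.sum_mul _ _ _
    rw [e1, e2]
    simp only [← Finset.sum_add_distrib]
    have per : ∀ M Q, (b M * i M) * (a Q * L Q) + (a Q * L Q) * (b M * i M)
        = -∑ P, X Q M P • (a Q * (b M * i P)) := by
      intro M Q
      have f1 : (b M * i M) * (a Q * L Q) = -(a Q * (b M * (i M * L Q))) := by
        rw [mul_assoc, iaX M Q]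
        simp only [mul_neg]
        rw [baX M Q]
      have f2 : (a Q * L Q) * (b M * i M) = a Q * (b M * (L Q * i M)) := by
        rw [mul_assoc, LbX Q M]
      rw [f1, f2,
        show -(a Q * (b M * (i M * L Q))) + a Q * (b M * (L Q * i M))
          = a Q * (b M * (L Q * i M - i M * L Q)) from by
            simp only [mul_sub]; abel,
        h_Li Q M]
      simp only [mul_neg, Finset.mul_sum, mul_smul_comm]
    rw [Finset.sum_congr rfl fun M _ => Finset.sum_congr rfl fun Q _ => per M Q]
    calc ∑ M, ∑ Q, -∑ P, X Q M P • (a Q * (b M * i P))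
        = -∑ M, ∑ Q, ∑ P, X Q M P • (a Q * (b M * i P)) := by
          simp only [Finset.sum_neg_distrib]
      _ = -∑ M, ∑ Q, ∑ P, X Q P M • (a Q * (b P * i M)) := by
          rw [sum_swap13 (fun M Q P => X Q M P • (a Q * (b M * i P)))]
      _ = -∑ M, ∑ N, ∑ P, X N P M • (a N * (b P * i M)) := rfl
  -- c8 : E * E = (1/2) • (-T3)
  have c8 : E * E = (1/2 : ℝ) • (-T3) := by
    have hEE : E * E + E * E = -T3 := by
      rw [hE, hT3]
      have e1 : (∑ M, a M * L M) * (∑ N, a N * L N)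
          = ∑ M, ∑ N, (a M * L M) * (a N * L N) := by
        rw [Finset.sum_mul]
        exact Finset.sum_congr rfl fun M _ => Finset.mul_sum _ _ _
      nth_rewrite 2 [show (∑ M, a M * L M) * (∑ N, a N * L N)
          = ∑ M, ∑ N, (a N * L N) * (a M * L M) from by
        rw [Finset.mul_sum]
        exact Finset.sum_congr rfl fun M _ => Finset.sum_mul _ _ _]
      rw [e1]
      simp only [← Finset.sum_add_distrib]
      have per : ∀ M N, (a M * L M) * (a N * L N) + (a N * L N) * (a M * L M)
          = -∑ P, X M N P • (a M * (a N * L P)) := by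
        intro M N
        have f1 : (a M * L M) * (a N * L N) = a M * (a N * (L M * L N)) := by
          rw [mul_assoc, LaX M N]
        have f2 : (a N * L N) * (a M * L M) = -(a M * (a N * (L N * L M))) := by
          rw [mul_assoc, LaX N M, aaX N M]
        have hcomm : L M * L N - L N * L M = -∑ P, X M N P • L P := by
          rw [hLL M N]; abel
        rw [f1, f2,
          show a M * (a N * (L M * L N)) + -(a M * (a N * (L N * L M)))
            = a M * (a N * (L M * L N - L N * L M)) from by
              simp only [mul_sub]; abel,
          hcomm]
        simp only [mul_neg, Finset.mul_sum, mul_smul_comm]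
      rw [Finset.sum_congr rfl fun M _ => Finset.sum_congr rfl fun N _ => per M N]
      calc ∑ M, ∑ N, -∑ P, X M N P • (a M * (a N * L P))
          = -∑ M, ∑ N, ∑ P, X M N P • (a M * (a N * L P)) := by
            simp only [Finset.sum_neg_distrib]
        _ = -∑ M, ∑ N, ∑ P, X N P M • (a N * (a P * L M)) := by
            rw [sum_rot3 (fun M N P => X M N P • (a M * (a N * L P)))]
    calc E * E = (1/2 : ℝ) • (E * E + E * E) := by
          rw [← two_smul ℝ, smul_smul]; norm_num
      _ = (1/2 : ℝ) • (-T3) := by rw [hEE]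
  -- real-number identities: from the quadratic constraint to the Jacobi identity
  have quad' : ∀ M N P Q, (∑ R, X M N R * X R P Q)
      = (∑ R, X N P R * X R M Q) + (∑ R, X P M R * X R N Q) := by
    intro M N P Q
    have h := h_quad M N P Q
    have e : ∀ R, X M R Q * X N P R - X N R Q * X M P R
        = -(X N P R * X R M Q) - X P M R * X R N Q := by
      intro R
      rw [hX_asym M R Q, hX_asym N R Q, hX_asym M P R]; ring
    rw [Finset.sum_congr rfl fun R _ => e R] at h
    simp only [Finset.sum_sub_distrib, Finset.sum_neg_distrib] at h
    linarith
  have jacobi : ∀ A B C D, (∑ R, X A B R * X R C D) + (∑ R, X B C R * X R A D)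
      + (∑ R, X C A R * X R B D) = 0 := by
    intro A B C D
    have q1 := quad' A B C D
    have q2 := quad' B C A D
    have q3 := quad' C A B D
    linarith
  have N1 : ∀ N P Q R, (∑ M, X N P M * X Q M R) + (∑ M, X P Q M * X N M R)
      + (∑ M, X Q N M * X P M R) = 0 := by
    intro N P Q R
    have j := jacobi N P Q R
    have t1 : (∑ M, X N P M * X Q M R) = -(∑ M, X N P M * X M Q R) := by
      rw [← Finset.sum_neg_distrib]
      refine Finset.sum_congr rfl fun M _ => ?_
      rw [hX_asym Q M R]; ring
    have t2 : (∑ M, X P Q M * X N M R) = -(∑ M, X P Q M * X M N R) := by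
      rw [← Finset.sum_neg_distrib]
      refine Finset.sum_congr rfl fun M _ => ?_
      rw [hX_asym N M R]; ring
    have t3 : (∑ M, X Q N M * X P M R) = -(∑ M, X Q N M * X M P R) := by
      rw [← Finset.sum_neg_distrib]
      refine Finset.sum_congr rfl fun M _ => ?_
      rw [hX_asym P M R]; ring
    linarith
  -- c9 : G0 * E + E * G0 = 0
  have Wc1 : ∀ N P Q (x : Module.End ℝ Ω),
      a P * (a Q * (a N * x)) = a N * (a P * (a Q * x)) := by
    intro N P Q x
    rw [aaX Q N]
    simp only [mul_neg]
    rw [aaX P N]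
    simp only [neg_neg]
  have Wc2 : ∀ N P Q (x : Module.End ℝ Ω),
      a Q * (a N * (a P * x)) = a N * (a P * (a Q * x)) := by
    intro N P Q x
    rw [aaX Q N, aaX Q P]
    simp only [mul_neg, neg_neg]
  have SW : (∑ N, ∑ P, ∑ Q, ∑ R, (∑ M, X N P M * X Q M R) • (a N * (a P * (a Q * i R))))
      = 0 := by
    set S : Module.End ℝ Ω :=
      ∑ N, ∑ P, ∑ Q, ∑ R, (∑ M, X N P M * X Q M R) • (a N * (a P * (a Q * i R))) with hS
    have r1 : S = ∑ N, ∑ P, ∑ Q, ∑ R,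
        (∑ M, X P Q M * X N M R) • (a N * (a P * (a Q * i R))) := by
      rw [hS, sum_rot3 (fun N P Q => ∑ R,
        (∑ M, X N P M * X Q M R) • (a N * (a P * (a Q * i R))))]
      refine Finset.sum_congr rfl fun N _ => Finset.sum_congr rfl fun P _ =>
        Finset.sum_congr rfl fun Q _ => Finset.sum_congr rfl fun R _ => ?_
      rw [Wc1]
    have r2 : S = ∑ N, ∑ P, ∑ Q, ∑ R,
        (∑ M, X Q N M * X P M R) • (a N * (a P * (a Q * i R))) := by
      rw [hS, sum_rot3' (fun N P Q => ∑ R,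
        (∑ M, X N P M * X Q M R) • (a N * (a P * (a Q * i R))))]
      refine Finset.sum_congr rfl fun N _ => Finset.sum_congr rfl fun P _ =>
        Finset.sum_congr rfl fun Q _ => Finset.sum_congr rfl fun R _ => ?_
      rw [Wc2]
    have h3S : S + S + S = 0 := by
      nth_rewrite 2 [r1]
      nth_rewrite 2 [r2]
      rw [hS]
      simp only [← Finset.sum_add_distrib, ← add_smul]
      refine Finset.sum_eq_zero fun N _ => Finset.sum_eq_zero fun P _ =>
        Finset.sum_eq_zero fun Q _ => Finset.sum_eq_zero fun R _ => ?_
      have hc := N1 N P Q R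
      rw [← Finset.sum_add_distrib, ← Finset.sum_add_distrib] at hc
      rw [hc, zero_smul]
    have h3S' : (3 : ℝ) • S = 0 := by
      rw [show (3 : ℝ) = 1 + 1 + 1 by norm_num, add_smul, add_smul, one_smul]
      exact h3S
    calc S = (1/3 : ℝ) • ((3 : ℝ) • S) := by rw [smul_smul]; norm_num
      _ = 0 := by rw [h3S', smul_zero]
  have c9 : G0 * E + E * G0 = 0 := by
    have e1 : G0 * E = ∑ M, ∑ N, ∑ P, ∑ Q,
        X N P M • ((a N * (a P * i M)) * (a Q * L Q)) := by
      rw [hG0, hE, Finset.sum_mul]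
      refine Finset.sum_congr rfl fun M _ => ?_
      rw [Finset.sum_mul]
      refine Finset.sum_congr rfl fun N _ => ?_
      rw [Finset.sum_mul]
      refine Finset.sum_congr rfl fun P _ => ?_
      rw [smul_mul_assoc, Finset.mul_sum, Finset.smul_sum]
    have e2 : E * G0 = ∑ M, ∑ N, ∑ P, ∑ Q,
        X N P M • ((a Q * L Q) * (a N * (a P * i M))) := by
      rw [hE, hG0, Finset.mul_sum]
      refine Finset.sum_congr rfl fun M _ => ?_
      rw [Finset.mul_sum]
      refine Finset.sum_congr rfl fun N _ => ?_
      rw [Finset.mul_sum]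
      refine Finset.sum_congr rfl fun P _ => ?_
      rw [mul_smul_comm, Finset.sum_mul, Finset.smul_sum]
    rw [e1, e2]
    simp only [← Finset.sum_add_distrib, ← smul_add]
    have per : ∀ M N P Q,
        (a N * (a P * i M)) * (a Q * L Q) + (a Q * L Q) * (a N * (a P * i M))
        = -∑ R, X Q M R • (a N * (a P * (a Q * i R))) := by
      intro M N P Q
      have f1 : (a N * (a P * i M)) * (a Q * L Q)
          = -(a N * (a P * (a Q * (i M * L Q)))) := by
        rw [mul_assoc, mul_assoc, iaX M Q]
        simp only [mul_neg]
      have f2 : (a Q * L Q) * (a N * (a P * i M))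
          = a N * (a P * (a Q * (L Q * i M))) := by
        rw [mul_assoc, LaX Q N, LaX Q P, aaX Q N, aaX Q P]
        simp only [mul_neg, neg_neg]
      rw [f1, f2,
        show -(a N * (a P * (a Q * (i M * L Q)))) + a N * (a P * (a Q * (L Q * i M)))
          = a N * (a P * (a Q * (L Q * i M - i M * L Q))) from by
            simp only [mul_sub]; abel,
        h_Li Q M]
      simp only [mul_neg, Finset.mul_sum, mul_smul_comm]
    calc ∑ M, ∑ N, ∑ P, ∑ Q, X N P M •
          ((a N * (a P * i M)) * (a Q * L Q) + (a Q * L Q) * (a N * (a P * i M)))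
        = ∑ M, ∑ N, ∑ P, ∑ Q, X N P M •
            (-∑ R, X Q M R • (a N * (a P * (a Q * i R)))) := by
          exact Finset.sum_congr rfl fun M _ => Finset.sum_congr rfl fun N _ =>
            Finset.sum_congr rfl fun P _ => Finset.sum_congr rfl fun Q _ => by
              rw [per M N P Q]
      _ = -∑ M, ∑ N, ∑ P, ∑ Q, ∑ R,
            (X N P M * X Q M R) • (a N * (a P * (a Q * i R))) := by
          simp only [smul_neg, Finset.smul_sum, smul_smul, Finset.sum_neg_distrib]
      _ = -∑ N, ∑ P, ∑ Q, ∑ R, ∑ M,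
            (X N P M * X Q M R) • (a N * (a P * (a Q * i R))) := by
          rw [sum_rot5 (fun N P Q R M =>
            (X N P M * X Q M R) • (a N * (a P * (a Q * i R))))]
      _ = -∑ N, ∑ P, ∑ Q, ∑ R,
            (∑ M, X N P M * X Q M R) • (a N * (a P * (a Q * i R))) := by
          simp only [← Finset.sum_smul]
      _ = 0 := by rw [SW, neg_zero]
  -- final assembly
  have cg1 : d * G + G * d = (1/2 : ℝ) • (-T2 - T2 + T3) := by
    rw [hG, mul_smul_comm, smul_mul_assoc, ← smul_add, c3a, c3b]
  have cg2 : B * G + G * B = 0 := by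
    rw [hG, mul_smul_comm, smul_mul_assoc, ← smul_add, c5, smul_zero]
  have cg3 : G * G = 0 := by
    rw [hG, mul_smul_comm, smul_mul_assoc, c6]
    simp
  have cg4 : G * E + E * G = 0 := by
    rw [hG, smul_mul_assoc, mul_smul_comm, ← smul_add, c9, smul_zero]
  rw [hsplit]
  have expand : (d + (B + G) - E) * (d + (B + G) - E)
      = d*d + (d*B + B*d) + (d*G + G*d) - (d*E + E*d) + B*B + (B*G + G*B)
        - (B*E + E*B) + G*G - (G*E + E*G) + E*E := by noncomm_ring
  rw [expand, h_dd, c1, c2, cg1, c4, cg2, c7, cg3, cg4, c8]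
  module
end
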